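/- Let f : [a,b] → ℝ be convex on [a,b], let a = x₀ < x₁ < … < x_n = b be a division, and let ξ_i ∈ [x_i, x_{i+1}] for i = 0, …, n−1 be intermediate points. Define G_n(f) = Σ_{i=0}^{n−1} [ (ξ_i − x_i)·f(x_i) + (x_{i+1} − ξ_i)·f(x_{i+1}) ] and S_n(f) = G_n(f) − ∫_a^b f(t) dt. Then (1/2)·[ Σ_{i=0}^{n−1} (x_{i+1} − ξ_i)²·f′₊(ξ_i) − Σ_{i=0}^{n−1} (ξ_i − x_i)²·f′₋(ξ_i) ] ≤ S_n(f) ≤ (1/2)·[ (b − ξ_{n−1})²·f′₋(b) + Σ_{i=1}^{n−1} ( (x_i − ξ_{i−1})²·f′₋(x_i) − (ξ_i − x_i)²·f′₊(x_i) ) − (ξ_0 − a)²·f′₊(a) ]. -/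
import Mathlib


open MeasureTheory Set intervalIntegral Finset

/-- Right derivative at `y` is below the slope to any `t > y`. -/
lemma aux_rderiv_le_slope {s : Set ℝ} {f : ℝ → ℝ} (hf : ConvexOn ℝ s f)
    {y t D : ℝ} (hy : y ∈ s) (ht : t ∈ s) (hyt : y < t)
    (hD : HasDerivWithinAt f D (Ici y) y) : D ≤ (f t - f y) / (t - y) := by
  rw [hasDerivWithinAt_iff_tendsto_slope, Ici_sdiff_left] at hD
  refine le_of_tendsto hD ?_
  filter_upwards [self_mem_nhdsWithin, Ioo_mem_nhdsGT_of_mem ⟨le_refl y, hyt⟩] with z hz hz2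
  have hzs : z ∈ s := hf.1.ordConnected.out hy ht ⟨le_of_lt hz, le_of_lt hz2.2⟩
  have := hf.secant_mono hy hzs ht (ne_of_gt hz) (ne_of_gt hyt) (le_of_lt hz2.2)
  simpa [slope_def_field, div_eq_div_iff] using this

/-- Slope from any `t < y` is below the left derivative at `y`. -/
lemma aux_slope_le_lderiv {s : Set ℝ} {f : ℝ → ℝ} (hf : ConvexOn ℝ s f)
    {y t D : ℝ} (hy : y ∈ s) (ht : t ∈ s) (hty : t < y)
    (hD : HasDerivWithinAt f D (Iic y) y) : (f y - f t) / (y - t) ≤ D := by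
  rw [hasDerivWithinAt_iff_tendsto_slope, Iic_diff_right] at hD
  refine ge_of_tendsto hD ?_
  filter_upwards [self_mem_nhdsWithin, Ioo_mem_nhdsLT_of_mem ⟨hty, le_refl y⟩] with z hz hz2
  have hzs : z ∈ s := hf.1.ordConnected.out ht hy ⟨le_of_lt hz2.1, le_of_lt hz⟩
  have := hf.secant_mono hy ht hzs (ne_of_lt hty) (ne_of_lt hz) (le_of_lt hz2.1)
  have e1 : (f t - f y) / (t - y) = (f y - f t) / (y - t) := by
    rw [← neg_div_neg_eq]; ring_nf
  have e2 : (f z - f y) / (z - y) = (f y - f z) / (y - z) := by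
    rw [← neg_div_neg_eq]; ring_nf
  rw [e1, e2] at this
  calc (f y - f t) / (y - t) ≤ (f y - f z) / (y - z) := this
  _ = slope f y z := by rw [slope_def_field]; rw [← neg_div_neg_eq]; ring_nf
lemma aux_lin_int (u v c d : ℝ) : ∫ t in u..v, (c + d * t) = c * (v - u) + d * (v^2 - u^2) / 2 := by
  rw [intervalIntegral.integral_add intervalIntegrable_const
    ((by fun_prop : Continuous fun t : ℝ => d * t).intervalIntegrable u v),
    intervalIntegral.integral_const_mul, integral_id, intervalIntegral.integral_const]
  simp
  ring
lemma aux_step {a b : ℝ} {f : ℝ → ℝ} (hf : ConvexOn ℝ (Icc a b) f)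
    (hcont : ContinuousOn f (Icc a b))
    {u v w : ℝ} (hau : a ≤ u) (huv : u < v) (hvb : v ≤ b)
    (hw1 : u ≤ w) (hw2 : w ≤ v)
    {Du Dv Dpw Dmw : ℝ}
    (hDu : HasDerivWithinAt f Du (Ici u) u)
    (hDv : HasDerivWithinAt f Dv (Iic v) v)
    (hDpw : w < v → HasDerivWithinAt f Dpw (Ici w) w)
    (hDmw : u < w → HasDerivWithinAt f Dmw (Iic w) w) :
    (1/2) * ((v - w)^2 * Dpw - (w - u)^2 * Dmw) ≤
      (w - u) * f u + (v - w) * f v - ∫ t in u..v, f t ∧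
    (w - u) * f u + (v - w) * f v - ∫ t in u..v, f t ≤
      (1/2) * ((v - w)^2 * Dv - (w - u)^2 * Du) := by
  have hus : u ∈ Icc a b := ⟨hau, le_of_lt (lt_of_lt_of_le huv hvb)⟩
  have hvs : v ∈ Icc a b := ⟨le_trans hau (le_of_lt huv), hvb⟩
  have hws : w ∈ Icc a b := ⟨le_trans hau hw1, le_trans hw2 hvb⟩
  have hmem : ∀ t ∈ Icc u v, t ∈ Icc a b := fun t ht =>
    ⟨le_trans hau ht.1, le_trans ht.2 hvb⟩
  have hint1 : IntervalIntegrable f MeasureTheory.volume u w :=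
    (hcont.mono fun t ht => hmem t ⟨ht.1, le_trans ht.2 hw2⟩).intervalIntegrable_of_Icc hw1
  have hint2 : IntervalIntegrable f MeasureTheory.volume w v :=
    (hcont.mono fun t ht => hmem t ⟨le_trans hw1 ht.1, ht.2⟩).intervalIntegrable_of_Icc hw2
  have hsplit : (∫ t in u..v, f t) = (∫ t in u..w, f t) + ∫ t in w..v, f t :=
    (intervalIntegral.integral_add_adjacent_intervals hint1 hint2).symm
  -- upper bound pieces
  have hU1 : (w - u) * f u + Du * (w - u)^2 / 2 ≤ ∫ t in u..w, f t := by
    have hpt : ∀ t ∈ Icc u w, (f u - Du * u) + Du * t ≤ f t := by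
      intro t ht
      rcases eq_or_lt_of_le ht.1 with rfl | htu
      · simp
      · have hts : t ∈ Icc a b := hmem t ⟨ht.1, le_trans ht.2 hw2⟩
        have := aux_rderiv_le_slope hf hus hts htu hDu
        rw [le_div_iff₀ (by linarith)] at this
        nlinarith
    have := intervalIntegral.integral_mono_on hw1
      ((by fun_prop : Continuous fun t : ℝ => (f u - Du * u) + Du * t).intervalIntegrable u w)
      hint1 hpt
    rw [aux_lin_int] at this
    nlinarith
  have hU2 : (v - w) * f v + Dv * ((w - v)^2) / 2 * (-1) ≤ ∫ t in w..v, f t := by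
    have hpt : ∀ t ∈ Icc w v, (f v - Dv * v) + Dv * t ≤ f t := by
      intro t ht
      rcases eq_or_lt_of_le ht.2 with rfl | htv
      · simp
      · have hts : t ∈ Icc a b := hmem t ⟨le_trans hw1 ht.1, ht.2⟩
        have := aux_slope_le_lderiv hf hvs hts htv hDv
        rw [div_le_iff₀ (by linarith)] at this
        nlinarith
    have := intervalIntegral.integral_mono_on hw2
      ((by fun_prop : Continuous fun t : ℝ => (f v - Dv * v) + Dv * t).intervalIntegrable w v)
      hint2 hpt
    rw [aux_lin_int] at this
    nlinarith
  -- lower bound pieces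
  have hL1 : (∫ t in u..w, f t) ≤ (w - u) * f u + Dmw * (w - u)^2 / 2 := by
    rcases eq_or_lt_of_le hw1 with rfl | huw
    · simp
    · have hDm := hDmw huw
      have hpt : ∀ t ∈ Icc u w, f t ≤ (f u - Dmw * u) + Dmw * t := by
        intro t ht
        rcases eq_or_lt_of_le ht.1 with rfl | htu
        · simp
        · have hts : t ∈ Icc a b := hmem t ⟨ht.1, le_trans ht.2 hw2⟩
          -- slope(u,t) ≤ slope(u,w) ≤ Dmw
          have h1 : (f t - f u) / (t - u) ≤ (f w - f u) / (w - u) :=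
            hf.secant_mono hus hts hws (ne_of_gt htu) (ne_of_gt huw) ht.2
          have h2 : (f w - f u) / (w - u) ≤ Dmw := aux_slope_le_lderiv hf hws hus huw hDm
          have := le_trans h1 h2
          rw [div_le_iff₀ (by linarith)] at this
          nlinarith
      have := intervalIntegral.integral_mono_on hw1 hint1
        ((by fun_prop : Continuous fun t : ℝ => (f u - Dmw * u) + Dmw * t).intervalIntegrable u w)
        hpt
      rw [aux_lin_int] at this
      nlinarith
  have hL2 : (∫ t in w..v, f t) ≤ (v - w) * f v - Dpw * (v - w)^2 / 2 := by
    rcases eq_or_lt_of_le hw2 with rfl | hwv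
    · simp
    · have hDpw' := hDpw hwv
      have hpt : ∀ t ∈ Icc w v, f t ≤ (f v - Dpw * v) + Dpw * t := by
        intro t ht
        rcases eq_or_lt_of_le ht.2 with rfl | htv
        · simp
        · have hts : t ∈ Icc a b := hmem t ⟨le_trans hw1 ht.1, ht.2⟩
          -- Dpw ≤ slope(w,v) ≤ slope(t,v)  i.e. (f v - f t)/(v - t) ≥ Dpw
          have h1 : Dpw ≤ (f v - f w) / (v - w) := aux_rderiv_le_slope hf hws hvs hwv hDpw'
          have h2 : (f w - f v) / (w - v) ≤ (f t - f v) / (t - v) :=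
            hf.secant_mono hvs hws hts (ne_of_lt hwv) (ne_of_lt htv) ht.1
          have e1 : (f w - f v) / (w - v) = (f v - f w) / (v - w) := by
            rw [← neg_div_neg_eq]; ring_nf
          have e2 : (f t - f v) / (t - v) = (f v - f t) / (v - t) := by
            rw [← neg_div_neg_eq]; ring_nf
          rw [e1, e2] at h2
          have := le_trans h1 h2
          rw [le_div_iff₀ (by linarith)] at this
          nlinarith
      have := intervalIntegral.integral_mono_on hw2 hint2
        ((by fun_prop : Continuous fun t : ℝ => (f v - Dpw * v) + Dpw * t).intervalIntegrable w v)
        hpt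
      rw [aux_lin_int] at this
      nlinarith
  constructor <;> rw [hsplit] <;> nlinarith [hU1, hU2, hL1, hL2]


/-- **The composite generalised trapezoid rule for convex functions** (Theorem 4):
bounds for the remainder `Sₙ(f) = Gₙ(f) − ∫_a^b f` of the generalised trapezoid
rule `Gₙ(f) = Σᵢ [(ξᵢ − xᵢ) f(xᵢ) + (xᵢ₊₁ − ξᵢ) f(xᵢ₊₁)]` associated to a
division `a = x₀ < x₁ < … < xₙ = b` and intermediate points `ξᵢ ∈ [xᵢ, xᵢ₊₁]`.
Here `Dp y` (resp. `Dm y`) is the right (resp. left) derivative of `f` at `y`. -/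
theorem composite_trapezoid_convex
    (a b : ℝ) (hab : a < b) (f : ℝ → ℝ)
    (hf : ConvexOn ℝ (Set.Icc a b) f)
    (n : ℕ) (hn : 0 < n) (x ξ : ℕ → ℝ)
    (hxa : x 0 = a) (hxb : x n = b)
    (hxmono : ∀ i < n, x i < x (i + 1))
    (hξ : ∀ i < n, ξ i ∈ Set.Icc (x i) (x (i + 1)))
    (Dp Dm : ℝ → ℝ)
    (hDp : ∀ y ∈ Set.Ico a b, HasDerivWithinAt f (Dp y) (Set.Ici y) y)
    (hDm : ∀ y ∈ Set.Ioc a b, HasDerivWithinAt f (Dm y) (Set.Iic y) y) :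
    (1 / 2) * ((∑ i ∈ Finset.range n, (x (i + 1) - ξ i) ^ 2 * Dp (ξ i)) -
          ∑ i ∈ Finset.range n, (ξ i - x i) ^ 2 * Dm (ξ i)) ≤
        (∑ i ∈ Finset.range n,
            ((ξ i - x i) * f (x i) + (x (i + 1) - ξ i) * f (x (i + 1)))) -
          (∫ t in a..b, f t) ∧
      (∑ i ∈ Finset.range n,
          ((ξ i - x i) * f (x i) + (x (i + 1) - ξ i) * f (x (i + 1)))) -
          (∫ t in a..b, f t) ≤
        (1 / 2) * ((b - ξ (n - 1)) ^ 2 * Dm b +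
          (∑ i ∈ Finset.Ico 1 n,
            ((x i - ξ (i - 1)) ^ 2 * Dm (x i) - (ξ i - x i) ^ 2 * Dp (x i))) -
          (ξ 0 - a) ^ 2 * Dp a) := by
  have hmono : ∀ i j, i ≤ j → j ≤ n → x i ≤ x j := by
    intro i j hij hjn
    induction j with
    | zero => exact le_of_eq (by rw [Nat.le_zero.mp hij])
    | succ k ih =>
      rcases Nat.eq_or_lt_of_le hij with rfl | h
      · exact le_rfl
      · exact le_trans (ih (by omega) (by omega)) (le_of_lt (hxmono k (by omega)))
  have ha_le : ∀ i ≤ n, a ≤ x i := fun i hi => hxa ▸ hmono 0 i (Nat.zero_le _) hi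
  have hle_b : ∀ i ≤ n, x i ≤ b := fun i hi => hxb ▸ hmono i n hi le_rfl
  have hcont : ContinuousOn f (Icc a b) := by
    intro y hy
    rcases eq_or_lt_of_le hy.2 with rfl | hyb
    · exact ((hDm y ⟨hab, le_rfl⟩).continuousWithinAt).mono (fun t ht => ht.2)
    · have h1 := (hDp y ⟨hy.1, hyb⟩).continuousWithinAt
      rcases eq_or_lt_of_le hy.1 with rfl | hay
      · exact h1.mono fun t ht => ht.1
      · have h2 := (hDm y ⟨hay, hy.2⟩).continuousWithinAt
        have h3 := h2.union h1
        rw [Iic_union_Ici] at h3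
        exact (continuousWithinAt_univ f y).mp h3 |>.continuousWithinAt
  have hstep : ∀ i < n,
      (1/2) * ((x (i+1) - ξ i)^2 * Dp (ξ i) - (ξ i - x i)^2 * Dm (ξ i)) ≤
        (ξ i - x i) * f (x i) + (x (i+1) - ξ i) * f (x (i+1)) -
          ∫ t in x i..x (i+1), f t ∧
      (ξ i - x i) * f (x i) + (x (i+1) - ξ i) * f (x (i+1)) -
          (∫ t in x i..x (i+1), f t) ≤
        (1/2) * ((x (i+1) - ξ i)^2 * Dm (x (i+1)) - (ξ i - x i)^2 * Dp (x i)) := by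
    intro i hi
    have h1 : a ≤ x i := ha_le i (le_of_lt hi)
    have h2 : x (i+1) ≤ b := hle_b (i+1) hi
    have hxi := hxmono i hi
    have hξi := hξ i hi
    exact aux_step hf hcont h1 hxi h2 hξi.1 hξi.2
      (hDp (x i) ⟨h1, lt_of_lt_of_le hxi h2⟩)
      (hDm (x (i+1)) ⟨lt_of_le_of_lt h1 hxi, h2⟩)
      (fun h => hDp (ξ i) ⟨le_trans h1 hξi.1, lt_of_lt_of_le h h2⟩)
      (fun h => hDm (ξ i) ⟨lt_of_le_of_lt h1 h, le_trans hξi.2 h2⟩)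
  have htel : ∑ i ∈ Finset.range n, ∫ t in x i..x (i+1), f t = ∫ t in a..b, f t := by
    rw [← hxa, ← hxb]
    exact intervalIntegral.sum_integral_adjacent_intervals fun k hk =>
      (hcont.mono (Icc_subset_Icc (ha_le k hk.le) (hle_b (k+1) hk))).intervalIntegrable_of_Icc
        (hxmono k hk).le
  have hGS : (∑ i ∈ Finset.range n,
        ((ξ i - x i) * f (x i) + (x (i + 1) - ξ i) * f (x (i + 1)))) - ∫ t in a..b, f t
      = ∑ i ∈ Finset.range n, (((ξ i - x i) * f (x i) + (x (i + 1) - ξ i) * f (x (i + 1))) -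
          ∫ t in x i..x (i+1), f t) := by
    rw [Finset.sum_sub_distrib, htel]
  constructor
  · rw [hGS, ← Finset.sum_sub_distrib, Finset.mul_sum]
    exact Finset.sum_le_sum fun i hi => (hstep i (Finset.mem_range.mp hi)).1
  · rw [hGS]
    refine le_trans (Finset.sum_le_sum fun i hi => (hstep i (Finset.mem_range.mp hi)).2)
      (le_of_eq ?_)
    obtain ⟨m, rfl⟩ : ∃ m, n = m + 1 := ⟨n - 1, by omega⟩
    rw [← Finset.mul_sum]
    congr 1
    rw [Finset.sum_sub_distrib, Finset.sum_Ico_eq_sum_range]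
    simp only [Nat.add_sub_cancel, show ∀ k, 1 + k - 1 = k from fun k => by omega,
      show ∀ k, 1 + k = k + 1 from fun k => by omega]
    rw [Finset.sum_range_succ (fun i => (x (i+1) - ξ i)^2 * Dm (x (i+1))) m,
      Finset.sum_range_succ' (fun i => (ξ i - x i)^2 * Dp (x i)) m,
      Finset.sum_sub_distrib, hxa, hxb]
    ring
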